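/- Let f ∈ H^∞(T^∞) and ε > 0. Then ‖f·g‖_{L²(T^∞)} ≥ ε‖g‖_{L²(T^∞)} for every g ∈ H²(T^∞) if and only if |f(w)| ≥ ε for almost every w ∈ T^∞. -/

import Mathlib

open MeasureTheory ComplexConjugate Filter Set
open scoped ENNReal NNReal

noncomputable section

namespace DilationDirichlet

/-! ## The interval `(0,1)` and dilation systems -/

/-- Lebesgue measure restricted to the interval `(0,1)`. -/
def M01 : Measure ℝ := volume.restrict (Set.Ioo (0 : ℝ) 1)

/-- The odd, `2`-periodic extension to `ℝ` of a function defined on `(0,1)`. -/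
def oddExt (φ : ℝ → ℂ) (x : ℝ) : ℂ :=
  let y := x - 2 * (⌊x / 2⌋ : ℝ)
  if y ≤ 1 then φ y else -φ (2 - y)

/-- The dilation system `φ_n(x) = φ(n x)` of (the odd `2`-periodic extension of)
a function `φ ∈ L²(0,1)`. -/
def dilSys (φ : Lp ℂ 2 M01) (n : ℕ+) : ℝ → ℂ :=
  fun x => oddExt (⇑φ) ((n : ℕ) * x)

/-- The sine orthonormal basis `e_n(x) = √2 sin(π n x)` of `L²(0,1)`. -/
def esin (n : ℕ) (x : ℝ) : ℂ := ((Real.sqrt 2 * Real.sin (Real.pi * (n : ℝ) * x) : ℝ) : ℂ)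

/-- The `L²(0,1)` inner product `⟨f,g⟩ = ∫ f ḡ`, linear in the first variable. -/
def ip01 (f g : ℝ → ℂ) : ℂ := ∫ x, f x * conj (g x) ∂M01

/-- The Dirichlet series `S f = ∑ aₙ n^{-s}` associated to `f ∈ L²(0,1)`, recorded through its
coefficients `aₙ = ⟨f, eₙ⟩`, viewed as an arithmetic function (so that multiplication of
arithmetic functions is exactly the Dirichlet convolution of Dirichlet series). -/
def SAF (φ : Lp ℂ 2 M01) : ArithmeticFunction ℂ :=
  ⟨fun n => ip01 (⇑φ) (esin n), by simp [ip01, esin]⟩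

/-- Membership in the Hardy space `H²` of Dirichlet series: the coefficients are
square-summable. -/
def memH2AF (a : ArithmeticFunction ℂ) : Prop := Summable fun n : ℕ => ‖a n‖ ^ 2

/-- A Dirichlet series is a multiplier of `H²` when (Dirichlet-)multiplication by it
preserves `H²`. -/
def IsMultiplierAF (a : ArithmeticFunction ℂ) : Prop :=
  ∀ b : ArithmeticFunction ℂ, memH2AF b → memH2AF (a * b)

/-- `⟨f, φ_n⟩` for the dilation system of `φ`. -/
def dilCoef (φ f : Lp ℂ 2 M01) (n : ℕ+) : ℂ := ip01 (⇑f) (dilSys φ n)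

/-- The dilation system of `φ` is a Bessel sequence in `L²(0,1)`. -/
def IsBesselDil (φ : Lp ℂ 2 M01) : Prop :=
  ∃ B : ℝ, 0 < B ∧ ∀ f : Lp ℂ 2 M01,
    ∑' n : ℕ+, (‖dilCoef φ f n‖₊ : ℝ≥0∞) ^ 2 ≤ ENNReal.ofReal B * (‖f‖₊ : ℝ≥0∞) ^ 2

/-- The dilation system of `φ` satisfies the lower frame bound in `L²(0,1)`. -/
def HasLowerFrameDil (φ : Lp ℂ 2 M01) : Prop :=
  ∃ A : ℝ, 0 < A ∧ ∀ f : Lp ℂ 2 M01,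
    ENNReal.ofReal A * (‖f‖₊ : ℝ≥0∞) ^ 2 ≤ ∑' n : ℕ+, (‖dilCoef φ f n‖₊ : ℝ≥0∞) ^ 2

/-- The dilation system of `φ` is a frame for `L²(0,1)`. -/
def IsFrameDil (φ : Lp ℂ 2 M01) : Prop :=
  ∃ A B : ℝ, 0 < A ∧ A ≤ B ∧ ∀ f : Lp ℂ 2 M01,
    ENNReal.ofReal A * (‖f‖₊ : ℝ≥0∞) ^ 2 ≤ ∑' n : ℕ+, (‖dilCoef φ f n‖₊ : ℝ≥0∞) ^ 2 ∧
    ∑' n : ℕ+, (‖dilCoef φ f n‖₊ : ℝ≥0∞) ^ 2 ≤ ENNReal.ofReal B * (‖f‖₊ : ℝ≥0∞) ^ 2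

/-- `∑ |cₙ|²` for a finitely supported family of scalars. -/
def sqSum (c : ℕ+ →₀ ℂ) : ℝ := ∑ n ∈ c.support, ‖c n‖ ^ 2

/-- The finite linear combination `∑ cₙ φ_n` of the dilation system. -/
def comboDil (φ : Lp ℂ 2 M01) (c : ℕ+ →₀ ℂ) : ℝ → ℂ :=
  fun x => ∑ n ∈ c.support, c n * dilSys φ n x

/-- The `L²(0,1)` norm of a function. -/
def L2norm01 (g : ℝ → ℂ) : ℝ := Real.sqrt (∫ x, ‖g x‖ ^ 2 ∂M01)

/-- The dilation system of `φ` is a Riesz sequence in `L²(0,1)`. -/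
def IsRieszSeqDil (φ : Lp ℂ 2 M01) : Prop :=
  ∃ A B : ℝ, 0 < A ∧ A ≤ B ∧ ∀ c : ℕ+ →₀ ℂ,
    A * Real.sqrt (sqSum c) ≤ L2norm01 (comboDil φ c) ∧
    L2norm01 (comboDil φ c) ≤ B * Real.sqrt (sqSum c)

/-- The dilation system of `φ` is a Riesz basis for `L²(0,1)`: a Riesz sequence with dense
linear span. -/
def IsRieszBasisDil (φ : Lp ℂ 2 M01) : Prop :=
  IsRieszSeqDil φ ∧
    ∀ f : Lp ℂ 2 M01, ∀ ε : ℝ, 0 < ε →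
      ∃ c : ℕ+ →₀ ℂ, L2norm01 (fun x => f x - comboDil φ c x) < ε

/-- The dilation system of `φ` is an orthonormal sequence in `L²(0,1)`. -/
def IsOrthonormalDil (φ : Lp ℂ 2 M01) : Prop :=
  ∀ m n : ℕ+, ip01 (dilSys φ m) (dilSys φ n) = if m = n then 1 else 0

/-! ## The infinite torus `T^∞` -/

/-- The infinite torus `T^∞`, realized as a countable product of circles. -/
abbrev TInf := ℕ → AddCircle (1 : ℝ)

/-- The Haar probability measure on the infinite torus. -/
def muT : Measure TInf := Measure.addHaarMeasure ⊤

instance : IsProbabilityMeasure muT :=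
  ⟨by simpa [muT] using
    Measure.addHaarMeasure_self (K₀ := (⊤ : TopologicalSpace.PositiveCompacts TInf))⟩

/-- The monomial `w ↦ w^α` on `T^∞` associated with a finitely supported
multi-index `α ∈ ℤ^{(ℕ)}`. -/
def monoT (α : ℕ →₀ ℤ) (w : TInf) : ℂ := ∏ j ∈ α.support, fourier (α j) (w j)

/-- The Fourier coefficient `f̂(α) = ∫_{T^∞} f(w) w^{-α} dw`. -/
def fcoefT (f : TInf → ℂ) (α : ℕ →₀ ℤ) : ℂ := ∫ w, f w * conj (monoT α w) ∂muT

/-- The multi-index `α(n)` of exponents of the prime factorization `n = p^{α(n)}`,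
where the `j`-th coordinate corresponds to the `j`-th prime number. -/
def expIdx (n : ℕ) : ℕ →₀ ℤ :=
  ((Nat.factorization n).mapDomain (Nat.count Nat.Prime)).mapRange
    (fun k : ℕ => (k : ℤ)) (by simp)

/-- Membership in `H^∞(T^∞)`: essentially bounded and all Fourier coefficients with a negative
index vanish. -/
def memHinfT (f : TInf → ℂ) : Prop :=
  MemLp f ⊤ muT ∧ ∀ α : ℕ →₀ ℤ, (∃ j, α j < 0) → fcoefT f α = 0

/-- Membership in `H²(T^∞)`: square integrable and all Fourier coefficients with a negative
index vanish. -/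
def memH2T (f : TInf → ℂ) : Prop :=
  MemLp f 2 muT ∧ ∀ α : ℕ →₀ ℤ, (∃ j, α j < 0) → fcoefT f α = 0

/-- `f ∈ H²(T^∞)` is the Bohr lift of the Dirichlet series with coefficients `a`:
`f̂(α(n)) = aₙ` and all other Fourier coefficients vanish. -/
def IsBohrLiftOf (a : ArithmeticFunction ℂ) (f : TInf → ℂ) : Prop :=
  memH2T f ∧ (∀ n : ℕ+, fcoefT f (expIdx n) = a n) ∧
    ∀ α : ℕ →₀ ℤ, (∀ n : ℕ+, α ≠ expIdx n) → fcoefT f α = 0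

/-! ## `H²` as a Hilbert space of coefficient sequences -/

/-- The Hardy space `H²` of Dirichlet series, as the Hilbert space of square-summable
coefficient sequences. -/
abbrev H2sp := lp (fun _ : ℕ+ => ℂ) 2

/-- The (formal) Dirichlet series attached to an element of `H²`. -/
def toAF (E : H2sp) : ArithmeticFunction ℂ :=
  ⟨fun n => if h : 0 < n then E ⟨n, h⟩ else 0, by simp⟩

/-- The coefficient sequence of the Dirichlet series `n^{-s} * (∑ aₖ k^{-s})`:
Dirichlet convolution by `n^{-s}` shifts coefficients to multiples of `n`. -/
def shiftFun (n : ℕ+) (f : ℕ+ → ℂ) (k : ℕ+) : ℂ :=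
  if h : (n : ℕ) ∣ (k : ℕ) then
    f ⟨(k : ℕ) / (n : ℕ), Nat.div_pos (Nat.le_of_dvd k.2 h) n.2⟩
  else 0

lemma shiftFun_mul (n m : ℕ+) (f : ℕ+ → ℂ) : shiftFun n f (n * m) = f m := by
  have h : (n : ℕ) ∣ ((n * m : ℕ+) : ℕ) := ⟨m, by simp⟩
  rw [shiftFun, dif_pos h]
  congr 1
  apply Subtype.ext
  show ((n * m : ℕ+) : ℕ) / (n : ℕ) = (m : ℕ)
  rw [PNat.mul_coe]
  exact Nat.mul_div_cancel_left _ n.2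

lemma shiftFun_of_not_dvd {n k : ℕ+} (f : ℕ+ → ℂ) (h : ¬ (n : ℕ) ∣ (k : ℕ)) :
    shiftFun n f k = 0 := dif_neg h

lemma not_dvd_of_not_mem_range {n : ℕ+} {k : ℕ+}
    (hk : k ∉ Set.range (fun m : ℕ+ => n * m)) : ¬ (n : ℕ) ∣ (k : ℕ) := by
  intro hdvd
  obtain ⟨m, hm⟩ := hdvd
  have hm0 : 0 < m := by
    rcases Nat.eq_zero_or_pos m with h | h
    · subst h
      simp only [Nat.mul_zero] at hm
      exact absurd hm (Nat.pos_iff_ne_zero.mp k.2)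
    · exact h
  exact hk ⟨⟨m, hm0⟩, by apply Subtype.ext; exact hm.symm⟩

lemma mul_left_injective_pnat (n : ℕ+) : Function.Injective (fun m : ℕ+ => n * m) :=
  fun a b h => by
    apply Subtype.ext
    have : (n : ℕ) * a = (n : ℕ) * b := by
      have := congrArg (fun x : ℕ+ => (x : ℕ)) h
      simpa using this
    exact Nat.eq_of_mul_eq_mul_left n.2 this

lemma shiftFun_memℓp (n : ℕ+) (f : H2sp) : Memℓp (shiftFun n ⇑f) 2 := by
  apply memℓp_gen
  have hi := mul_left_injective_pnat n
  have hz : ∀ k : ℕ+, k ∉ Set.range (fun m : ℕ+ => n * m) →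
      ‖shiftFun n (⇑f) k‖ ^ (2 : ℝ≥0∞).toReal = 0 := by
    intro k hk
    rw [shiftFun_of_not_dvd _ (not_dvd_of_not_mem_range hk)]
    simp
  rw [← hi.summable_iff hz]
  have heq : ((fun k : ℕ+ => ‖shiftFun n (⇑f) k‖ ^ (2 : ℝ≥0∞).toReal) ∘
      (fun m : ℕ+ => n * m)) = fun m : ℕ+ => ‖f m‖ ^ (2 : ℝ≥0∞).toReal := by
    funext m
    simp [Function.comp, shiftFun_mul]
  rw [heq]
  exact (lp.memℓp f).summable (by norm_num)

/-- Dirichlet convolution by `n^{-s}` as a linear map on `H²`. -/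
def lamLin (n : ℕ+) : H2sp →ₗ[ℂ] H2sp where
  toFun f := ⟨shiftFun n ⇑f, shiftFun_memℓp n f⟩
  map_add' f g := by
    ext k
    show shiftFun n ⇑(f + g) k = shiftFun n ⇑f k + shiftFun n ⇑g k
    by_cases h : (n : ℕ) ∣ (k : ℕ) <;> simp [shiftFun, h] <;> rfl
  map_smul' c f := by
    ext k
    show shiftFun n ⇑(c • f) k = c • shiftFun n ⇑f k
    by_cases h : (n : ℕ) ∣ (k : ℕ) <;> simp [shiftFun, h] <;> rfl

lemma lamLin_coe (n : ℕ+) (f : H2sp) (k : ℕ+) : (lamLin n f) k = shiftFun n (⇑f) k := rfl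

lemma lamLin_norm (n : ℕ+) (f : H2sp) : ‖lamLin n f‖ = ‖f‖ := by
  rw [lp.norm_eq_tsum_rpow (by norm_num) (lamLin n f), lp.norm_eq_tsum_rpow (by norm_num) f]
  congr 1
  have hi := mul_left_injective_pnat n
  have hsupp : (Function.support fun k : ℕ+ => ‖(lamLin n f) k‖ ^ (2 : ℝ≥0∞).toReal) ⊆
      Set.range (fun m : ℕ+ => n * m) := by
    intro k hk
    by_contra hmem
    apply hk
    show ‖(lamLin n f) k‖ ^ (2 : ℝ≥0∞).toReal = 0
    rw [lamLin_coe, shiftFun_of_not_dvd _ (not_dvd_of_not_mem_range hmem)]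
    simp
  calc ∑' k : ℕ+, ‖(lamLin n f) k‖ ^ (2 : ℝ≥0∞).toReal
      = ∑' m : ℕ+, ‖(lamLin n f) (n * m)‖ ^ (2 : ℝ≥0∞).toReal :=
        (hi.tsum_eq (f := fun k : ℕ+ => ‖(lamLin n f) k‖ ^ (2 : ℝ≥0∞).toReal) hsupp).symm
    _ = ∑' m : ℕ+, ‖f m‖ ^ (2 : ℝ≥0∞).toReal := by
        refine tsum_congr fun m => ?_
        rw [lamLin_coe, shiftFun_mul]

/-- Dirichlet convolution by `n^{-s}`: the operator `Λ(n)` on `H²`. -/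
def lamOp (n : ℕ+) : H2sp →L[ℂ] H2sp :=
  (lamLin n).mkContinuous 1 (fun f => by rw [lamLin_norm]; simp)

/-- The restriction of an operator to an invariant subspace. -/
def restrictOp (T : H2sp →L[ℂ] H2sp) (I : Submodule ℂ H2sp)
    (h : ∀ x ∈ I, T x ∈ I) : I →L[ℂ] I :=
  { toFun := fun x => ⟨T x, h x x.2⟩
    map_add' := fun x y => Subtype.ext (by simp)
    map_smul' := fun c x => Subtype.ext (by simp)
    cont := Continuous.subtype_mk (T.continuous.comp continuous_subtype_val) _ }

/-- The Hilbert space adjoint of an operator on a closed subspace of `H²`. -/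
def adjOf {I : Submodule ℂ H2sp} (hcl : IsClosed (I : Set H2sp)) (T : I →L[ℂ] I) :
    I →L[ℂ] I :=
  haveI : CompleteSpace I := hcl.completeSpace_coe
  ContinuousLinearMap.adjoint T

/-! ## Dirichlet polynomials -/

/-- The Dirichlet series `m^{-s}` (coefficient `1` at `m`, `0` elsewhere). -/
def shiftAF (m : ℕ+) : ArithmeticFunction ℂ :=
  ⟨fun k => if k = (m : ℕ) then 1 else 0, by simp [Ne.symm m.ne_zero]⟩

/-- The constant Dirichlet series `c` (coefficient `c` at `1`, `0` elsewhere). -/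
def constAF (c : ℂ) : ArithmeticFunction ℂ :=
  ⟨fun k => if k = 1 then c else 0, by simp⟩

/-- The `i`-th prime number (`nthP 0 = 2`). -/
def nthP (i : ℕ) : ℕ+ := ⟨Nat.nth Nat.Prime i, (Nat.prime_nth_prime i).pos⟩

/-- The general term `aₙ w^{α(n)} n^{-(σ + it)}` of a vertical-limit Dirichlet series. -/
def dirTerm (a : ArithmeticFunction ℂ) (w : TInf) (t σ : ℝ) (n : ℕ+) : ℂ :=
  a n * monoT (expIdx n) w * ((n : ℕ) : ℂ) ^ (-((σ : ℂ) + (t : ℂ) * Complex.I))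

/-! ## The square `(0,1)²`, double Dirichlet series, and `T^∞ × T^∞` -/

/-- Lebesgue measure restricted to the square `(0,1)²`. -/
def M2 : Measure (ℝ × ℝ) := volume.restrict ((Set.Ioo (0 : ℝ) 1) ×ˢ (Set.Ioo (0 : ℝ) 1))

/-- The extension of a function on `(0,1)²` to `ℝ²`, odd and `2`-periodic in each variable. -/
def oddExt2 (φ : ℝ × ℝ → ℂ) (p : ℝ × ℝ) : ℂ :=
  oddExt (fun u => oddExt (fun v => φ (u, v)) p.2) p.1

/-- The double dilation system `φ_{m,n}(x,y) = φ(mx, ny)`. -/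
def dil2Sys (φ : Lp ℂ 2 M2) (m n : ℕ+) : ℝ × ℝ → ℂ :=
  fun p => oddExt2 (⇑φ) ((m : ℕ) * p.1, (n : ℕ) * p.2)

/-- The orthonormal basis `e_{m,n}(x,y) = 2 sin(πmx) sin(πny)` of `L²((0,1)²)`. -/
def esin2 (m n : ℕ) (p : ℝ × ℝ) : ℂ := esin m p.1 * esin n p.2

/-- The `L²((0,1)²)` inner product. -/
def ip2 (f g : ℝ × ℝ → ℂ) : ℂ := ∫ p, f p * conj (g p) ∂M2

/-- The coefficients `a_{m,n} = ⟨φ, e_{m,n}⟩` of the double Dirichlet series `S₂φ`. -/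
def SAF2 (φ : Lp ℂ 2 M2) (m n : ℕ) : ℂ := ip2 (⇑φ) (esin2 m n)

/-- Dirichlet convolution of double Dirichlet series (through their coefficients). -/
def conv2 (a b : ℕ → ℕ → ℂ) : ℕ → ℕ → ℂ := fun m n =>
  ∑ x ∈ m.divisorsAntidiagonal, ∑ y ∈ n.divisorsAntidiagonal, a x.1 y.1 * b x.2 y.2

/-- The unit for convolution of double Dirichlet series. -/
def one2 : ℕ → ℕ → ℂ := fun m n => if m = 1 ∧ n = 1 then 1 else 0

/-- Membership in `H²₂`: square-summable coefficients. -/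
def memH2sq (a : ℕ → ℕ → ℂ) : Prop := Summable fun q : ℕ+ × ℕ+ => ‖a q.1 q.2‖ ^ 2

/-- A double Dirichlet series is a multiplier of `H²₂`. -/
def IsMultiplier2 (a : ℕ → ℕ → ℂ) : Prop := ∀ b, memH2sq b → memH2sq (conv2 a b)

/-- The double dilation system of `φ` is a Bessel sequence in `L²((0,1)²)`. -/
def IsBessel2 (φ : Lp ℂ 2 M2) : Prop :=
  ∃ B : ℝ, 0 < B ∧ ∀ f : Lp ℂ 2 M2,
    ∑' q : ℕ+ × ℕ+, (‖ip2 (⇑f) (dil2Sys φ q.1 q.2)‖₊ : ℝ≥0∞) ^ 2 ≤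
      ENNReal.ofReal B * (‖f‖₊ : ℝ≥0∞) ^ 2

/-- The double dilation system of `φ` satisfies the lower frame bound in `L²((0,1)²)`. -/
def HasLowerFrame2 (φ : Lp ℂ 2 M2) : Prop :=
  ∃ A : ℝ, 0 < A ∧ ∀ f : Lp ℂ 2 M2,
    ENNReal.ofReal A * (‖f‖₊ : ℝ≥0∞) ^ 2 ≤
      ∑' q : ℕ+ × ℕ+, (‖ip2 (⇑f) (dil2Sys φ q.1 q.2)‖₊ : ℝ≥0∞) ^ 2

/-- `∑ |c_{m,n}|²` for a finitely supported family of scalars. -/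
def sqSum2 (c : (ℕ+ × ℕ+) →₀ ℂ) : ℝ := ∑ q ∈ c.support, ‖c q‖ ^ 2

/-- A finite linear combination of the double dilation system. -/
def combo2 (φ : Lp ℂ 2 M2) (c : (ℕ+ × ℕ+) →₀ ℂ) : ℝ × ℝ → ℂ :=
  fun p => ∑ q ∈ c.support, c q * dil2Sys φ q.1 q.2 p

/-- The `L²((0,1)²)` norm of a function. -/
def L2norm2 (g : ℝ × ℝ → ℂ) : ℝ := Real.sqrt (∫ p, ‖g p‖ ^ 2 ∂M2)

/-- The double dilation system of `φ` is a Riesz sequence in `L²((0,1)²)`. -/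
def IsRieszSeq2 (φ : Lp ℂ 2 M2) : Prop :=
  ∃ A B : ℝ, 0 < A ∧ A ≤ B ∧ ∀ c : (ℕ+ × ℕ+) →₀ ℂ,
    A * Real.sqrt (sqSum2 c) ≤ L2norm2 (combo2 φ c) ∧
    L2norm2 (combo2 φ c) ≤ B * Real.sqrt (sqSum2 c)

/-- Haar probability measure on `T^∞ × T^∞`. -/
def muT2 : Measure (TInf × TInf) := muT.prod muT

/-- Monomials on `T^∞ × T^∞`. -/
def mono2 (α β : ℕ →₀ ℤ) (p : TInf × TInf) : ℂ := monoT α p.1 * monoT β p.2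

/-- Fourier coefficients on `T^∞ × T^∞`. -/
def fcoef2 (f : TInf × TInf → ℂ) (α β : ℕ →₀ ℤ) : ℂ := ∫ p, f p * conj (mono2 α β p) ∂muT2

/-- Membership in `H^∞(T^∞ × T^∞)`. -/
def memHinfT2 (f : TInf × TInf → ℂ) : Prop :=
  MemLp f ⊤ muT2 ∧
    ∀ α β : ℕ →₀ ℤ, ((∃ j, α j < 0) ∨ (∃ j, β j < 0)) → fcoef2 f α β = 0

/-- Membership in `H²(T^∞ × T^∞)`. -/
def memH2T2 (f : TInf × TInf → ℂ) : Prop :=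
  MemLp f 2 muT2 ∧
    ∀ α β : ℕ →₀ ℤ, ((∃ j, α j < 0) ∨ (∃ j, β j < 0)) → fcoef2 f α β = 0

/-- `f ∈ H²(T^∞ × T^∞)` is the Bohr lift of the double Dirichlet series with
coefficients `a`. -/
def IsBohrLift2Of (a : ℕ → ℕ → ℂ) (f : TInf × TInf → ℂ) : Prop :=
  memH2T2 f ∧ (∀ m n : ℕ+, fcoef2 f (expIdx m) (expIdx n) = a m n) ∧
    ∀ α β : ℕ →₀ ℤ, (∀ m n : ℕ+, ¬(α = expIdx m ∧ β = expIdx n)) → fcoef2 f α β = 0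

/-- Interleaving bijection `ℕ ⊕ ℕ ≃ ℕ` used to interleave coordinates. -/
def interEquiv : ℕ ⊕ ℕ ≃ ℕ where
  toFun := Sum.elim (fun j => 2 * j) (fun j => 2 * j + 1)
  invFun := fun k => if k % 2 = 0 then Sum.inl (k / 2) else Sum.inr (k / 2)
  left_inv := by
    rintro (j | j)
    · dsimp only [Sum.elim_inl]
      rw [if_pos (Nat.mul_mod_right 2 j)]
      exact congrArg Sum.inl (by omega)
    · dsimp only [Sum.elim_inr]
      rw [if_neg (by omega)]
      exact congrArg Sum.inr (by omega)
  right_inv := by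
    intro k
    dsimp only
    by_cases h : k % 2 = 0
    · rw [if_pos h]
      simp only [Sum.elim_inl]
      omega
    · rw [if_neg h]
      simp only [Sum.elim_inr]
      omega

/-- The interleaving of two multi-indices: `(α, β) ↦ (α₁, β₁, α₂, β₂, …)`. -/
def interIdx (α β : ℕ →₀ ℤ) : ℕ →₀ ℤ :=
  Finsupp.equivMapDomain interEquiv (Finsupp.sumElim α β)

/-- The interleaving homeomorphism `T^∞ × T^∞ → T^∞`,
`((x_i), (y_i)) ↦ (x₁, y₁, x₂, y₂, …)`. -/
def interMap (p : TInf × TInf) : TInf :=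
  fun k => if k % 2 = 0 then p.1 (k / 2) else p.2 (k / 2)

end DilationDirichlet

/-!
Multiplying `g` by a monomial `w^β`, which has modulus one, changes neither side of
`ε ‖g‖₂ ≤ ‖f g‖₂`, and a large enough `β` moves any trigonometric polynomial into `H²`. Hence the
inequality holds for all trigonometric polynomials. These are dense in `L²(T^∞)` by
Stone–Weierstrass, and multiplication by `f ∈ L^∞` is continuous on `L²`, so it holds on all
of `L²`. Tested on the indicator of `{|f| ≤ r}` with `r < ε`, it forces that set to be null.
The converse is a pointwise estimate.
-/

namespace MeasureTheory

section MultiplicationOperator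

variable {α 𝕜 : Type*} [MeasurableSpace α] [RCLike 𝕜] {μ : Measure α} {p : ℝ≥0∞}
  {f : α → 𝕜} {ε : ℝ}

lemma ofReal_mul_eLpNorm_le_eLpNorm_mul (h : ∀ᵐ x ∂μ, ε ≤ ‖f x‖) (g : α → 𝕜) :
    ENNReal.ofReal ε * eLpNorm g p μ ≤ eLpNorm (fun x => f x * g x) p μ := by
  rcases le_or_gt ε 0 with hε | hε
  · simp [ENNReal.ofReal_of_nonpos hε]
  calc ENNReal.ofReal ε * eLpNorm g p μ = eLpNorm (ε • g) p μ := by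
        rw [eLpNorm_const_smul, Real.enorm_of_nonneg hε.le]
    _ ≤ eLpNorm (fun x => f x * g x) p μ := by
        refine eLpNorm_mono_ae (h.mono fun x hx => ?_)
        rw [Pi.smul_apply, norm_smul, norm_mul, Real.norm_of_nonneg hε.le]
        exact mul_le_mul_of_nonneg_right hx (norm_nonneg _)

lemma ae_lt_norm_of_forall_le_eLpNorm_mul [IsFiniteMeasure μ] (hp0 : p ≠ 0) (hp : p ≠ ∞)
    (hf : StronglyMeasurable f)
    (h : ∀ g, MemLp g p μ → ENNReal.ofReal ε * eLpNorm g p μ ≤ eLpNorm (fun x => f x * g x) p μ)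
    {r : ℝ} (hr : r < ε) : ∀ᵐ x ∂μ, r < ‖f x‖ := by
  rw [ae_iff]
  simp only [not_lt]
  by_contra hS0
  set S := {x | ‖f x‖ ≤ r}
  have hS : MeasurableSet S := measurableSet_le hf.measurable.norm measurable_const
  obtain ⟨x₀, hx₀⟩ := nonempty_of_measure_ne_zero hS0
  have hr0 : 0 ≤ r := (norm_nonneg _).trans hx₀
  set g : α → 𝕜 := S.indicator fun _ => 1
  have hg : MemLp g p μ := memLp_indicator_const p hS 1 (Or.inr (measure_ne_top μ S))
  have hg0 : eLpNorm g p μ ≠ 0 := by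
    rw [eLpNorm_indicator_const hS hp0 hp]
    simp [hS0]
  have hfg : eLpNorm (fun x => f x * g x) p μ ≤ ENNReal.ofReal r * eLpNorm g p μ := by
    refine eLpNorm_le_mul_eLpNorm_of_ae_le_mul (ae_of_all _ fun x => ?_) p
    by_cases hx : x ∈ S
    · simpa only [g, Set.indicator_of_mem hx, mul_one, norm_one]
    · simp [g, hx]
  have hεr : ENNReal.ofReal ε ≤ ENNReal.ofReal r :=
    (ENNReal.mul_le_mul_iff_left hg0 hg.eLpNorm_ne_top).mp ((h g hg).trans hfg)
  exact hr.not_ge ((ENNReal.ofReal_le_ofReal_iff hr0).mp hεr)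

lemma ae_le_norm_of_forall_le_eLpNorm_mul [IsFiniteMeasure μ] (hp0 : p ≠ 0) (hp : p ≠ ∞)
    (hf : AEStronglyMeasurable f μ)
    (h : ∀ g, MemLp g p μ → ENNReal.ofReal ε * eLpNorm g p μ ≤ eLpNorm (fun x => f x * g x) p μ) :
    ∀ᵐ x ∂μ, ε ≤ ‖f x‖ := by
  have h' : ∀ g, MemLp g p μ →
      ENNReal.ofReal ε * eLpNorm g p μ ≤ eLpNorm (fun x => hf.mk f x * g x) p μ := fun g hg =>
    (h g hg).trans_eq (eLpNorm_congr_ae (hf.ae_eq_mk.mul EventuallyEq.rfl))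
  have hlt : ∀ n : ℕ, ∀ᵐ x ∂μ, ε - 1 / (n + 1) < ‖hf.mk f x‖ := fun n =>
    ae_lt_norm_of_forall_le_eLpNorm_mul hp0 hp hf.stronglyMeasurable_mk h'
      (sub_lt_self ε Nat.one_div_pos_of_nat)
  filter_upwards [hf.ae_eq_mk, ae_all_iff.2 hlt] with x hfx hx
  refine le_of_forall_pos_lt_add fun δ hδ => ?_
  obtain ⟨n, hn⟩ := exists_nat_one_div_lt hδ
  rw [hfx]
  linarith [hx n]

lemma forall_memLp_le_eLpNorm_mul_of_dense [Fact (1 ≤ p)] (hf : MemLp f ∞ μ)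
    {s : Set (Lp 𝕜 p μ)} (hs : Dense s)
    (h : ∀ G ∈ s, ENNReal.ofReal ε * eLpNorm G p μ ≤ eLpNorm (fun x => f x * G x) p μ)
    (g : α → 𝕜) (hg : MemLp g p μ) :
    ENNReal.ofReal ε * eLpNorm g p μ ≤ eLpNorm (fun x => f x * g x) p μ := by
  set T := (ContinuousLinearMap.mul 𝕜 𝕜).holderL μ ∞ p p (hf.toLp f)
  have hT : ∀ G, ‖T G‖ₑ = eLpNorm (fun x => f x * G x) p μ := fun G => by
    rw [Lp.enorm_def]
    refine eLpNorm_congr_ae ((ContinuousLinearMap.coeFn_holder _ _ _).trans ?_)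
    filter_upwards [hf.coeFn_toLp] with x hx
    simp [hx]
  have hclosed : IsClosed {G : Lp 𝕜 p μ | ENNReal.ofReal ε * ‖G‖ₑ ≤ ‖T G‖ₑ} :=
    isClosed_le ((ENNReal.continuous_const_mul ENNReal.ofReal_ne_top).comp continuous_enorm)
      (continuous_enorm.comp T.continuous)
  have hall : ∀ G : Lp 𝕜 p μ, ENNReal.ofReal ε * ‖G‖ₑ ≤ ‖T G‖ₑ := fun G =>
    hclosed.closure_subset_iff.mpr (fun G hG => by simpa [hT, Lp.enorm_def] using h G hG)
      (hs.closure_eq ▸ Set.mem_univ G)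
  have hgG := hg.coeFn_toLp
  calc ENNReal.ofReal ε * eLpNorm g p μ = ENNReal.ofReal ε * ‖hg.toLp g‖ₑ := by
        rw [Lp.enorm_def, eLpNorm_congr_ae hgG]
    _ ≤ ‖T (hg.toLp g)‖ₑ := hall _
    _ = eLpNorm (fun x => f x * g x) p μ :=
        (hT _).trans (eLpNorm_congr_ae (EventuallyEq.rfl.mul hgG))

end MultiplicationOperator

end MeasureTheory

namespace DilationDirichlet

instance : muT.IsAddLeftInvariant := by unfold muT; infer_instance

lemma monoT_eq_prod (α : ℕ →₀ ℤ) {s : Finset ℕ} (hs : α.support ⊆ s) (w : TInf) :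
    monoT α w = ∏ j ∈ s, fourier (α j) (w j) := by
  refine Finset.prod_subset hs fun j _ hj => ?_
  rw [Finsupp.notMem_support_iff.mp hj, fourier_zero]

lemma continuous_monoT (α : ℕ →₀ ℤ) : Continuous (monoT α) :=
  continuous_finsetProd _ fun j _ => (fourier (α j)).continuous.comp (continuous_apply j)

lemma norm_monoT (α : ℕ →₀ ℤ) (w : TInf) : ‖monoT α w‖ = 1 := by
  rw [monoT, norm_prod]
  exact Finset.prod_eq_one fun j _ => Circle.norm_coe _

lemma monoT_zero (w : TInf) : monoT 0 w = 1 := by simp [monoT]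

lemma monoT_add (α β : ℕ →₀ ℤ) (w : TInf) : monoT (α + β) w = monoT α w * monoT β w := by
  rw [monoT_eq_prod α (s := α.support ∪ β.support) Finset.subset_union_left w,
    monoT_eq_prod β (s := α.support ∪ β.support) Finset.subset_union_right w,
    monoT_eq_prod (α + β) Finsupp.support_add w, ← Finset.prod_mul_distrib]
  exact Finset.prod_congr rfl fun j _ => by rw [Finsupp.add_apply, fourier_add]

lemma conj_monoT (α : ℕ →₀ ℤ) (w : TInf) : conj (monoT α w) = monoT (-α) w := by
  rw [monoT, map_prod, monoT, Finsupp.support_neg]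
  exact Finset.prod_congr rfl fun j _ => by rw [Finsupp.neg_apply, fourier_neg]

lemma monoT_apply_add (α : ℕ →₀ ℤ) (x y : TInf) :
    monoT α (x + y) = monoT α x * monoT α y := by
  rw [monoT, monoT, monoT, ← Finset.prod_mul_distrib]
  refine Finset.prod_congr rfl fun j _ => ?_
  rw [Pi.add_apply, fourier_apply, smul_add, AddCircle.toCircle_add]
  simp [fourier_apply]

lemma memLp_monoT (α : ℕ →₀ ℤ) (p : ℝ≥0∞) : MemLp (monoT α) p muT :=
  (memLp_top_of_bound (continuous_monoT α).aestronglyMeasurable 1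
    (Eventually.of_forall fun w => (norm_monoT α w).le)).mono_exponent le_top

-- Translating by a point where `w^α = -1` shows that the integral equals its own negative.
lemma integral_monoT_of_ne_zero {α : ℕ →₀ ℤ} (hα : α ≠ 0) : ∫ w, monoT α w ∂muT = 0 := by
  obtain ⟨j, hj⟩ : ∃ j, α j ≠ 0 := by
    by_contra! h
    exact hα (Finsupp.ext h)
  set y : TInf := Pi.single j ((1 / 2 / (α j : ℝ) : ℝ) : AddCircle (1 : ℝ))
  have hy : monoT α y = -1 := by
    rw [monoT, Finset.prod_eq_single j (fun k _ hk => by simp [y, hk])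
      (fun h => absurd (Finsupp.mem_support_iff.mpr hj) h)]
    have := fourier_add_half_inv_index (T := (1 : ℝ)) hj one_pos (0 : AddCircle (1 : ℝ))
    simp only [zero_add] at this
    simpa [y] using this
  have htrans : ∫ w, monoT α (y + w) ∂muT = ∫ w, monoT α w ∂muT :=
    integral_add_left_eq_self (monoT α) y
  simp only [monoT_apply_add, integral_const_mul, hy] at htrans
  linear_combination (-1 / 2 : ℂ) * htrans

lemma integral_monoT_mul_conj (α β : ℕ →₀ ℤ) :
    ∫ w, monoT α w * conj (monoT β w) ∂muT = if α = β then 1 else 0 := by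
  simp only [conj_monoT, ← monoT_add]
  split_ifs with hab
  · simp [hab, monoT_zero]
  · exact integral_monoT_of_ne_zero fun h0 => hab (add_neg_eq_zero.mp h0)

lemma eLpNorm_monoT_mul (α : ℕ →₀ ℤ) (g : TInf → ℂ) (p : ℝ≥0∞) :
    eLpNorm (fun w => monoT α w * g w) p muT = eLpNorm g p muT :=
  eLpNorm_congr_norm_ae (Eventually.of_forall fun w => by rw [norm_mul, norm_monoT, one_mul])

def trigP {n : ℕ} (c : Fin n → ℂ) (A : Fin n → ℕ →₀ ℤ) (w : TInf) : ℂ :=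
  ∑ i, c i * monoT (A i) w

section TrigPolynomial

variable {n : ℕ} (c : Fin n → ℂ) (A : Fin n → ℕ →₀ ℤ)

lemma memLp_trigP (p : ℝ≥0∞) : MemLp (trigP c A) p muT := by
  have h : trigP c A = ∑ i, fun w => c i * monoT (A i) w := by
    funext w
    simp [trigP]
  rw [h]
  exact memLp_finsetSum' _ fun i _ => (memLp_monoT (A i) p).const_mul (c i)

lemma fcoefT_trigP (β : ℕ →₀ ℤ) : fcoefT (trigP c A) β = ∑ i, if A i = β then c i else 0 := by
  have h : ∀ w, trigP c A w * conj (monoT β w) =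
      ∑ i, c i * (monoT (A i) w * conj (monoT β w)) := fun w => by
    simp only [trigP, Finset.sum_mul, mul_assoc]
  rw [fcoefT, integral_congr_ae (Eventually.of_forall h), integral_finsetSum]
  · simp [integral_const_mul, integral_monoT_mul_conj]
  · intro i _
    refine ((memLp_monoT (A i + -β) 1).integrable le_rfl).const_mul (c i) |>.congr ?_
    exact Eventually.of_forall fun w => by simp only [conj_monoT, monoT_add]

lemma memH2T_trigP (hA : ∀ i, 0 ≤ A i) : memH2T (trigP c A) := by
  refine ⟨memLp_trigP c A 2, fun β ⟨j, hj⟩ => ?_⟩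
  rw [fcoefT_trigP]
  refine Finset.sum_eq_zero fun i _ => if_neg fun h => ?_
  exact (h ▸ hA i j).not_gt hj

lemma trigP_add_const (β : ℕ →₀ ℤ) :
    trigP c (fun i => β + A i) = fun w => monoT β w * trigP c A w := by
  funext w
  simp only [trigP, Finset.mul_sum, monoT_add]
  exact Finset.sum_congr rfl fun i _ => by ring

end TrigPolynomial

lemma ofReal_mul_eLpNorm_trigP_le {f : TInf → ℂ} {ε : ℝ}
    (h : ∀ g : TInf → ℂ, memH2T g →
        ENNReal.ofReal ε * eLpNorm g 2 muT ≤ eLpNorm (fun w => f w * g w) 2 muT)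
    {n : ℕ} (c : Fin n → ℂ) (A : Fin n → ℕ →₀ ℤ) :
    ENNReal.ofReal ε * eLpNorm (trigP c A) 2 muT ≤
      eLpNorm (fun w => f w * trigP c A w) 2 muT := by
  obtain ⟨β, hβ⟩ : ∃ β : ℕ →₀ ℤ, ∀ i, 0 ≤ β + A i :=
    ⟨∑ i, -A i ⊔ 0, fun i j => by
      have := Finset.single_le_sum (f := fun k => -A k j ⊔ 0) (fun k _ => le_sup_right)
        (Finset.mem_univ i)
      simp only [Finsupp.add_apply, Finsupp.coe_finsetSum, Finset.sum_apply,
        Finsupp.sup_apply, Finsupp.neg_apply, Finsupp.coe_zero, Pi.zero_apply] at this ⊢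
      linarith [le_sup_left (a := -A i j) (b := 0)]⟩
  have hshift := h _ (memH2T_trigP c _ hβ)
  simp only [trigP_add_const, mul_left_comm (f _)] at hshift
  rwa [eLpNorm_monoT_mul, eLpNorm_monoT_mul] at hshift

def monoCM (α : ℕ →₀ ℤ) : C(TInf, ℂ) := ⟨monoT α, continuous_monoT α⟩

def monoSubalg : StarSubalgebra ℂ C(TInf, ℂ) where
  toSubalgebra := Algebra.adjoin ℂ (Set.range monoCM)
  star_mem' := by
    show Algebra.adjoin ℂ (Set.range monoCM) ≤ star (Algebra.adjoin ℂ (Set.range monoCM))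
    refine Algebra.adjoin_le ?_
    rintro - ⟨α, rfl⟩
    refine Algebra.subset_adjoin ⟨-α, ?_⟩
    ext w
    exact (conj_monoT α w).symm

lemma monoSubalg_toSubmodule :
    Subalgebra.toSubmodule monoSubalg.toSubalgebra = Submodule.span ℂ (Set.range monoCM) := by
  apply Algebra.adjoin_eq_span_of_subset
  refine Subset.trans (fun x hx => ?_) Submodule.subset_span
  refine Submonoid.closure_induction (fun _ => id) ⟨0, ?_⟩ ?_ hx
  · ext w
    exact monoT_zero w
  · rintro - - - - ⟨α, rfl⟩ ⟨β, rfl⟩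
    exact ⟨α + β, by ext w; exact monoT_add α β w⟩

lemma exists_trigP_eq_of_mem_monoSubalg {q : C(TInf, ℂ)} (hq : q ∈ monoSubalg) :
    ∃ (n : ℕ) (c : Fin n → ℂ) (A : Fin n → ℕ →₀ ℤ), ⇑q = trigP c A := by
  have hq' : q ∈ Submodule.span ℂ (Set.range monoCM) := by
    rw [← monoSubalg_toSubmodule]
    exact hq
  obtain ⟨n, c, v, rfl⟩ := Submodule.mem_span_set'.mp hq'
  choose A hA using fun i => (v i).2
  refine ⟨n, c, A, funext fun w => ?_⟩
  simp [trigP, ← hA, monoCM]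

lemma monoSubalg_separatesPoints : monoSubalg.SeparatesPoints := by
  intro x y hxy
  obtain ⟨j, hj⟩ : ∃ j, x j ≠ y j := by
    by_contra! h
    exact hxy (funext h)
  refine ⟨_, ⟨monoCM (Finsupp.single j 1), Algebra.subset_adjoin ⟨_, rfl⟩, rfl⟩, ?_⟩
  have hval : ∀ z : TInf, monoCM (Finsupp.single j 1) z = fourier 1 (z j) := fun z => by
    simp [monoCM, monoT]
  simp only [hval, fourier_one, ne_eq, Circle.coe_inj]
  exact fun h => hj (AddCircle.injective_toCircle one_ne_zero h)

lemma dense_toLp_monoSubalg :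
    Dense (ContinuousMap.toLp 2 muT ℂ '' (monoSubalg : Set C(TInf, ℂ))) := by
  refine (ContinuousMap.toLp_denseRange (p := 2) ℂ muT ℂ ENNReal.ofNat_ne_top).dense_image
    (ContinuousMap.toLp 2 muT ℂ).continuous ?_
  rw [dense_iff_closure_eq, ← StarSubalgebra.topologicalClosure_coe,
    ContinuousMap.starSubalgebra_topologicalClosure_eq_top_of_separatesPoints _
      monoSubalg_separatesPoints]
  rfl

theorem stmt_11_general (f : TInf → ℂ) (hf : memHinfT f) (ε : ℝ) :
    (∀ g : TInf → ℂ, memH2T g →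
        ENNReal.ofReal ε * eLpNorm g 2 muT ≤ eLpNorm (fun w => f w * g w) 2 muT)
      ↔ ∀ᵐ w ∂muT, ε ≤ ‖f w‖ := by
  refine ⟨fun h => ?_, fun h g _ => ofReal_mul_eLpNorm_le_eLpNorm_mul h g⟩
  refine ae_le_norm_of_forall_le_eLpNorm_mul two_ne_zero ENNReal.ofNat_ne_top
    hf.1.aestronglyMeasurable ?_
  refine forall_memLp_le_eLpNorm_mul_of_dense hf.1 dense_toLp_monoSubalg ?_
  rintro - ⟨q, hq, rfl⟩
  obtain ⟨n, c, A, hqA⟩ := exists_trigP_eq_of_mem_monoSubalg hq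
  have hG := ContinuousMap.coeFn_toLp (p := 2) muT (𝕜 := ℂ) q
  rw [hqA] at hG
  calc ENNReal.ofReal ε * eLpNorm (ContinuousMap.toLp 2 muT ℂ q) 2 muT
      = ENNReal.ofReal ε * eLpNorm (trigP c A) 2 muT := by rw [eLpNorm_congr_ae hG]
    _ ≤ eLpNorm (fun w => f w * trigP c A w) 2 muT := ofReal_mul_eLpNorm_trigP_le h c A
    _ = eLpNorm (fun w => f w * ContinuousMap.toLp 2 muT ℂ q w) 2 muT :=
        eLpNorm_congr_ae (EventuallyEq.rfl.mul hG.symm)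

/-- for `f ∈ H^∞(T^∞)` and `ε > 0`: `‖fg‖_{L²} ≥ ε ‖g‖_{L²}` for all
`g ∈ H²(T^∞)` iff `|f| ≥ ε` a.e. -/
theorem stmt_11 (f : TInf → ℂ) (hf : memHinfT f) (ε : ℝ) (hε : 0 < ε) :
    (∀ g : TInf → ℂ, memH2T g →
        ENNReal.ofReal ε * eLpNorm g 2 muT ≤ eLpNorm (fun w => f w * g w) 2 muT)
      ↔ ∀ᵐ w ∂muT, ε ≤ ‖f w‖ :=
  stmt_11_general f hf ε

end DilationDirichlet
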